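/- arXiv:1702.00067 — 5 statements merged into one kernel-verified Lean document; each statement's English description precedes it below -/
import Mathlib

section
/- Let μ be a probability measure on ℝ admitting an exponential moment, i.e. there exists λ ∈ ℝ \ {0} with ∫ e^{λx} dμ(x) < ∞. Then the characteristic function φ of μ cannot vanish identically on any nonempty open interval of ℝ. -/
/-!
Suppose `λ > 0` and `φ` vanishes on `(a, b)`. The complex moment generating function
`M z = ∫ exp (z x) dμ(x)` is holomorphic on the strip `0 < re z < λ`, continuous up to the
imaginary axis, and `M (i t) = φ t` vanishes for `t ∈ (a, b)`. Extended by zero across the axis,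
`M` stays continuous near `i (a, b)` and is holomorphic off the axis; splitting a rectangle along
the axis and applying Cauchy's theorem to each half shows that its rectangle integrals vanish, so it
is holomorphic by Morera's theorem. The identity theorem, applied twice, makes `M` vanish on the
whole strip, contradicting `M (λ / 2) = ∫ exp (λ x / 2) dμ(x) > 0`. The case `λ < 0` follows by
reflecting `x ↦ -x`.
-/

open MeasureTheory Set

lemma Convex.reProdIm {s t : Set ℝ} (hs : Convex ℝ s) (ht : Convex ℝ t) :
    Convex ℝ (s ×ℂ t) := by
  rw [← hs.convexHull_eq, ← ht.convexHull_eq, ← Complex.convexHull_reProdIm]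
  exact convex_convexHull ℝ _

namespace Complex

open scoped Interval

variable {E : Type*} [NormedAddCommGroup E] [NormedSpace ℂ E]

lemma wedgeIntegral_add_wedgeIntegral_split (f : ℂ → E) (z w : ℂ) (x : ℝ)
    (h₁ : IntervalIntegrable (fun u : ℝ => f (u + z.im * I)) volume z.re x)
    (h₂ : IntervalIntegrable (fun u : ℝ => f (u + z.im * I)) volume x w.re)
    (h₃ : IntervalIntegrable (fun u : ℝ => f (u + w.im * I)) volume z.re x)
    (h₄ : IntervalIntegrable (fun u : ℝ => f (u + w.im * I)) volume x w.re) :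
    wedgeIntegral z w f + wedgeIntegral w z f =
      (wedgeIntegral z (x + w.im * I) f + wedgeIntegral (x + w.im * I) z f) +
      (wedgeIntegral (x + z.im * I) w f + wedgeIntegral w (x + z.im * I) f) := by
  simp only [wedgeIntegral_add_wedgeIntegral_eq, add_re, ofReal_re, mul_re, I_re, mul_zero,
    ofReal_im, I_im, mul_one, sub_self, add_zero, add_im, mul_im, zero_add]
  rw [← intervalIntegral.integral_add_adjacent_intervals h₁ h₂,
    ← intervalIntegral.integral_add_adjacent_intervals h₃ h₄]
  abel

theorem isConservativeOn_of_differentiableOn_diff_re_eq {f : ℂ → E} {s t : Set ℝ} {x₀ : ℝ}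
    (hs : s.OrdConnected) (hx₀ : x₀ ∈ s) (hc : ContinuousOn f (s ×ℂ t))
    (hd : DifferentiableOn ℂ f (s ×ℂ t \ {z | z.re = x₀})) :
    IsConservativeOn f (s ×ℂ t) := by
  intro z w hzw
  obtain ⟨hre, him⟩ : [[z.re, w.re]] ⊆ s ∧ [[z.im, w.im]] ⊆ t := by
    simpa [Rectangle, reProdIm_subset_iff', nonempty_uIcc.ne_empty] using hzw
  have hint : ∀ y ∈ t, ∀ u ∈ s, ∀ v ∈ s,
      IntervalIntegrable (fun r : ℝ => f (r + y * I)) volume u v := by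
    intro y hy u hu v hv
    refine ContinuousOn.intervalIntegrable (hc.comp (by fun_prop) fun r hr => ?_)
    simpa [mem_reProdIm, hy] using hs.uIcc_subset hu hv hr
  -- A rectangle with a vertical side on the line `re = x₀` has its interior off that line.
  have hcauchy : ∀ p q : ℂ, (p.re = x₀ ∨ q.re = x₀) → [[p.re, q.re]] ⊆ s →
      [[p.im, q.im]] ⊆ t → wedgeIntegral p q f + wedgeIntegral q p f = 0 := by
    intro p q hpq hs' ht'
    rw [wedgeIntegral_add_wedgeIntegral_eq]
    refine integral_boundary_rect_eq_zero_of_continuousOn_of_differentiableOn f p q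
      (hc.mono (reProdIm_subset_iff'.2 (Or.inl ⟨hs', ht'⟩))) (hd.mono fun u hu => ?_)
    obtain ⟨⟨hu₁, hu₂⟩, hu₃, hu₄⟩ := hu
    refine ⟨⟨hs' ⟨le_of_lt hu₁, le_of_lt hu₂⟩, ht' ⟨le_of_lt hu₃, le_of_lt hu₄⟩⟩, ?_⟩
    rintro (hu : u.re = x₀)
    rcases hpq with h | h <;> rw [hu, ← h] at hu₁ hu₂ <;>
      simp only [min_lt_iff, lt_max_iff, lt_self_iff_false, false_or, or_false] at hu₁ hu₂ <;>
      linarith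
  have hz := hre left_mem_uIcc
  have hw := hre right_mem_uIcc
  rw [← add_eq_zero_iff_eq_neg, wedgeIntegral_add_wedgeIntegral_split f z w x₀
    (hint _ (him left_mem_uIcc) _ hz _ hx₀) (hint _ (him left_mem_uIcc) _ hx₀ _ hw)
    (hint _ (him right_mem_uIcc) _ hz _ hx₀) (hint _ (him right_mem_uIcc) _ hx₀ _ hw),
    hcauchy _ _ (by simp) (by simpa using hs.uIcc_subset hz hx₀) (by simpa using him),
    hcauchy _ _ (by simp) (by simpa using hs.uIcc_subset hx₀ hw) (by simpa using him), add_zero]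

open Filter Topology in
theorem eqOn_zero_of_forall_mul_I_eq_zero {f : ℂ → ℂ} {c a b : ℝ}
    (hc : ContinuousOn f (Ico 0 c ×ℂ Ioo a b)) (hd : DifferentiableOn ℂ f (Ioo 0 c ×ℂ Ioo a b))
    (hf : ∀ t ∈ Ioo a b, f (t * I) = 0) :
    EqOn f 0 (Ioo 0 c ×ℂ Ioo a b) := by
  intro z hz
  obtain ⟨⟨hz₀, hzc⟩, hzt⟩ := hz
  set F : ℂ → ℂ := fun w => if 0 ≤ w.re then f w else 0 with hF
  set V := Ioo (-c) c ×ℂ Ioo a b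
  have hV : IsOpen V := isOpen_Ioo.reProdIm isOpen_Ioo
  have hFc : ContinuousOn F V := by
    refine ContinuousOn.if (fun w ⟨hwV, hw⟩ => ?_) (hc.mono ?_) continuousOn_const
    · have hw0 : w.re = 0 := (frontier_le_subset_eq continuous_const continuous_re hw).symm
      rw [show w = w.im * I from ext (by simp [hw0]) (by simp)]
      exact hf _ hwV.2
    · rw [(isClosed_le continuous_const continuous_re).closure_eq]
      exact fun w ⟨hwV, hw⟩ => ⟨⟨hw, hwV.1.2⟩, hwV.2⟩
  have hFd : DifferentiableOn ℂ F (V \ {w | w.re = 0}) := by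
    rintro w ⟨hwV, hw⟩
    refine DifferentiableAt.differentiableWithinAt ?_
    rcases lt_or_gt_of_ne (hw : w.re ≠ 0) with hneg | hpos
    · refine (differentiableAt_const (0 : ℂ)).congr_of_eventuallyEq ?_
      filter_upwards [(isOpen_lt continuous_re continuous_const).mem_nhds hneg] with u hu
      simp [hF, not_le.2 (hu : u.re < 0)]
    · have hU : Ioo 0 c ×ℂ Ioo a b ∈ 𝓝 w :=
        (isOpen_Ioo.reProdIm isOpen_Ioo).mem_nhds ⟨⟨hpos, hwV.1.2⟩, hwV.2⟩
      refine (hd.differentiableAt hU).congr_of_eventuallyEq ?_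
      filter_upwards [hU] with u hu
      simp [hF, hu.1.1.le]
  have hFa : AnalyticOnNhd ℂ F V :=
    ((isConservativeOn_and_continuousOn_iff_isDifferentiableOn hV).1
      ⟨isConservativeOn_of_differentiableOn_diff_re_eq ordConnected_Ioo
        ⟨by linarith, by linarith⟩ hFc hFd, hFc⟩).analyticOnNhd hV
  set w₀ : ℂ := (-c / 2 : ℝ) + z.im * I
  have hw₀re : w₀.re = -c / 2 := by simp [w₀]
  have hw₀ : w₀ ∈ V :=
    ⟨show w₀.re ∈ Ioo (-c) c by rw [hw₀re]; constructor <;> linarith, by simpa [w₀] using hzt⟩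
  have hF₀ : F =ᶠ[𝓝 w₀] 0 := by
    filter_upwards [(isOpen_lt continuous_re continuous_const).mem_nhds
      (show w₀.re < 0 by linarith)] with u hu
    simp [hF, not_le.2 (hu : u.re < 0)]
  have := hFa.eqOn_zero_of_preconnected_of_eventuallyEq_zero
    ((convex_Ioo _ _).reProdIm (convex_Ioo _ _)).isPreconnected hw₀ hF₀
    (show z ∈ V from ⟨⟨by linarith, hzc⟩, hzt⟩)
  simpa [hF, hz₀.le] using this

end Complex

lemma Real.exp_mul_le_exp_mul_add_exp_mul {u v t x : ℝ} (hut : u ≤ t) (htv : t ≤ v) :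
    Real.exp (t * x) ≤ Real.exp (u * x) + Real.exp (v * x) := by
  rcases le_total 0 x with hx | hx
  · have := Real.exp_le_exp.2 (mul_le_mul_of_nonneg_right htv hx)
    linarith [Real.exp_pos (u * x)]
  · have := Real.exp_le_exp.2 (mul_le_mul_of_nonpos_right hut hx)
    linarith [Real.exp_pos (v * x)]

namespace ProbabilityTheory

open Complex Filter

variable {Ω : Type*} {m : MeasurableSpace Ω} {X : Ω → ℝ} {μ : Measure Ω} {u v : ℝ}

lemma continuousOn_complexMGF (hX : AEMeasurable X μ) (hu : u ∈ integrableExpSet X μ)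
    (hv : v ∈ integrableExpSet X μ) :
    ContinuousOn (complexMGF X μ) {z | z.re ∈ Icc u v} := by
  refine continuousOn_of_dominated (bound := fun ω => Real.exp (u * X ω) + Real.exp (v * X ω))
    (fun z _ => by fun_prop) (fun z hz => ae_of_all _ fun ω => ?_) (hu.add hv)
    (ae_of_all _ fun ω => by fun_prop)
  rw [norm_exp, re_mul_ofReal]
  exact Real.exp_mul_le_exp_mul_add_exp_mul hz.1 hz.2

theorem exists_complexMGF_mul_I_ne_zero [IsFiniteMeasure μ] [NeZero μ] {lam a b : ℝ}
    (hlam : 0 < lam) (hint : Integrable (fun ω => Real.exp (lam * X ω)) μ) (hab : a < b) :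
    ∃ t ∈ Ioo a b, complexMGF X μ (t * I) ≠ 0 := by
  by_contra! h
  have h0 : 0 ∈ integrableExpSet X μ := by simp [integrableExpSet]
  have hX : AEMeasurable X μ := aemeasurable_of_integrable_exp_mul hlam.ne (by simp) hint
  have hstrip : Ioo 0 lam ⊆ interior (integrableExpSet X μ) :=
    interior_Icc (a := (0 : ℝ)) ▸ interior_mono (convex_integrableExpSet.ordConnected.out h0 hint)
  have hbox : EqOn (complexMGF X μ) 0 (Ioo 0 lam ×ℂ Ioo a b) :=
    eqOn_zero_of_forall_mul_I_eq_zero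
      ((continuousOn_complexMGF hX h0 hint).mono fun z hz => Ico_subset_Icc_self hz.1)
      (differentiableOn_complexMGF.mono fun z hz => hstrip hz.1) h
  have hS : AnalyticOnNhd ℂ (complexMGF X μ) (Ioo 0 lam ×ℂ univ) :=
    analyticOnNhd_complexMGF.mono fun z hz => hstrip hz.1
  set z₀ : ℂ := (lam / 2 : ℝ) + ((a + b) / 2 : ℝ) * I
  have hz₀ : z₀ ∈ Ioo 0 lam ×ℂ Ioo a b := by
    simp only [z₀, mem_reProdIm, add_re, ofReal_re, mul_re, I_re, I_im, ofReal_im, add_im,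
      mul_im, mem_Ioo]
    constructor <;> constructor <;> linarith
  have hS0 : EqOn (complexMGF X μ) 0 (Ioo 0 lam ×ℂ univ) :=
    hS.eqOn_zero_of_preconnected_of_eventuallyEq_zero
      ((convex_Ioo _ _).reProdIm convex_univ).isPreconnected ⟨hz₀.1, trivial⟩
      (eventuallyEq_of_mem ((isOpen_Ioo.reProdIm isOpen_Ioo).mem_nhds hz₀) hbox)
  have hmgf : mgf X μ (lam / 2) = 0 := by
    rw [← re_complexMGF_ofReal, hS0 (by simp [mem_reProdIm, hlam])]
    simp
  exact (mgf_pos_iff.2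
    (integrable_exp_mul_of_nonneg_of_le hint (by linarith) (by linarith))).ne' hmgf

end ProbabilityTheory

open ProbabilityTheory

theorem stmt2
    (μ : Measure ℝ) [IsProbabilityMeasure μ]
    (φ : ℝ → ℂ) (hφ : ∀ t, φ t = ∫ x, Complex.exp (t * x * Complex.I) ∂μ)
    (lam : ℝ) (hlam : lam ≠ 0)
    (hint : Integrable (fun x => Real.exp (lam * x)) μ)
    (a b : ℝ) (hab : a < b) :
    ∃ t ∈ Ioo a b, φ t ≠ 0 := by
  have hφX : ∀ (X : ℝ → ℝ) (σ : ℝ), (∀ x, X x = σ * x) →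
      ∀ t : ℝ, complexMGF X μ (t * Complex.I) = φ (σ * t) := by
    intro X σ hX t
    rw [hφ, complexMGF]
    congr 1 with x
    push_cast [hX]
    ring_nf
  rcases hlam.lt_or_gt with hneg | hpos
  · obtain ⟨t, ht, hne⟩ := exists_complexMGF_mul_I_ne_zero (X := fun x => -x) (neg_pos.2 hneg)
      (by simpa using hint) (neg_lt_neg hab)
    refine ⟨-t, ⟨by linarith [ht.2], by linarith [ht.1]⟩, ?_⟩
    simpa [hφX (fun x => -x) (-1) (by simp)] using hne
  · obtain ⟨t, ht, hne⟩ := exists_complexMGF_mul_I_ne_zero (X := id) hpos hint hab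
    exact ⟨t, ht, by simpa [hφX id 1 (by simp)] using hne⟩
end

section
/- Let k : ℝ → ℂ be measurable such that the absolute moments M_n = ∫_ℝ |u|^n |k(u)| du are finite for all n ≥ 0 and satisfy limsup_n M_n/n! < ∞. Let φ : ℝ → ℂ be bounded and continuous, and define Ψ(t) = ∫_ℝ e^{iut} φ(u) k(u) du. Then Ψ is real-analytic on ℝ. -/
/-!
Write `Ψ(x + y) = ∫ e^{iuy} e^{iux} φ(u) k(u) du` and expand `e^{iuy}` in its Taylor series. The
`n`-th term has integral norm at most `|y|^n M_n / n!`, which is summable for `|y| < 1` because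
`M_n / n!` is bounded; so sum and integral may be swapped, and `Ψ` is given near `x` by the power
series with coefficients `(i^n / n!) ∫ u^n e^{iux} φ(u) k(u) du`, of radius at least `1`.
-/

open MeasureTheory Filter Asymptotics

namespace FourierMoment

open scoped Nat

variable {μ : Measure ℝ} {g : ℝ → ℂ}

noncomputable def series (μ : Measure ℝ) (g : ℝ → ℂ) : FormalMultilinearSeries ℝ ℝ ℂ :=
  fun n => ContinuousMultilinearMap.mkPiRing ℝ (Fin n)
    (Complex.I ^ n / n ! * ∫ u, (u : ℂ) ^ n * g u ∂μ)

lemma series_apply (n : ℕ) (y : ℝ) :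
    series μ g n (fun _ => y) = (y * Complex.I) ^ n / n ! * ∫ u, (u : ℂ) ^ n * g u ∂μ := by
  simp only [series, ContinuousMultilinearMap.mkPiRing_apply, Finset.prod_const,
    Finset.card_univ, Fintype.card_fin, Complex.real_smul]
  push_cast
  ring

lemma norm_series_le (n : ℕ) :
    ‖series μ g n‖ ≤ (∫ u, |u| ^ n * ‖g u‖ ∂μ) / n ! := by
  rw [series, ContinuousMultilinearMap.norm_mkPiRing, norm_mul, norm_div, norm_pow,
    Complex.norm_I, one_pow, Complex.norm_natCast, one_div_mul_eq_div]
  gcongr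
  refine (norm_integral_le_integral_norm _).trans_eq ?_
  simp [norm_pow]

lemma norm_cexp_mul_I (u t : ℝ) : ‖Complex.exp (u * t * Complex.I)‖ = 1 := by
  rw [← Complex.ofReal_mul]
  exact Complex.norm_exp_ofReal_mul_I _

lemma hasSum_series (hg : AEStronglyMeasurable g μ)
    (hmom : ∀ n : ℕ, Integrable (fun u => |u| ^ n * ‖g u‖) μ)
    (hbound : (fun n : ℕ => (∫ u, |u| ^ n * ‖g u‖ ∂μ) / n !) =O[atTop] fun _ => (1 : ℝ))
    {y : ℝ} (hy : |y| < 1) :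
    HasSum (fun n => series μ g n (fun _ => y))
      (∫ u, Complex.exp (u * y * Complex.I) * g u ∂μ) := by
  set F : ℕ → ℝ → ℂ := fun n u => (u * y * Complex.I) ^ n / n ! * g u
  have hF_norm : ∀ n u, ‖F n u‖ = |y| ^ n / n ! * (|u| ^ n * ‖g u‖) := fun n u => by
    simp only [F, norm_mul, norm_div, norm_pow, Complex.norm_I, Complex.norm_real,
      Real.norm_eq_abs, Complex.norm_natCast]
    ring
  have hF_int : ∀ n, Integrable (F n) μ := fun n => by
    refine ((hmom n).const_mul (|y| ^ n / n !)).mono' ?_ (.of_forall fun u => (hF_norm n u).le)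
    exact ((Complex.continuous_ofReal.mul continuous_const |>.mul continuous_const |>.pow n
      |>.div_const _).aestronglyMeasurable.mul hg)
  have hF_sum : Summable fun n => ∫ u, ‖F n u‖ ∂μ := by
    simp_rw [hF_norm, integral_const_mul]
    refine summable_of_isBigO_nat (summable_geometric_of_lt_one (abs_nonneg y) hy) ?_
    have h_bigO := hbound.mul (isBigO_refl (fun n : ℕ => |y| ^ n) atTop)
    simp only [one_mul] at h_bigO
    exact h_bigO.congr_left fun n => by ring
  have h_exp : ∀ u, ∑' n, F n u = Complex.exp (u * y * Complex.I) * g u := fun u => by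
    rw [Complex.exp_eq_exp_ℂ]
    exact ((NormedSpace.expSeries_div_hasSum_exp _).mul_right (g u)).tsum_eq
  have h_term : ∀ n, ∫ u, F n u ∂μ = series μ g n (fun _ => y) := fun n => by
    simp only [F, series_apply, mul_pow, ← integral_const_mul]
    congr 1 with u
    ring
  simpa [h_exp, h_term] using hasSum_integral_of_summable_integral_norm hF_int hF_sum

lemma hasFPowerSeriesOnBall (hg : AEStronglyMeasurable g μ)
    (hmom : ∀ n : ℕ, Integrable (fun u => |u| ^ n * ‖g u‖) μ)
    (hbound : (fun n : ℕ => (∫ u, |u| ^ n * ‖g u‖ ∂μ) / n !) =O[atTop] fun _ => (1 : ℝ)) :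
    HasFPowerSeriesOnBall (fun t : ℝ => ∫ u, Complex.exp (u * t * Complex.I) * g u ∂μ)
      (series μ g) 0 1 where
  r_le := by
    refine ENNReal.coe_one ▸ (series μ g).le_radius_of_isBigO ?_
    refine (IsBigO.of_bound 1 (.of_forall fun n => ?_)).trans hbound
    rw [NNReal.coe_one, one_pow, mul_one, norm_norm, one_mul, Real.norm_eq_abs]
    exact (norm_series_le n).trans (le_abs_self _)
  r_pos := zero_lt_one
  hasSum {y} hy := by
    rw [zero_add]
    refine hasSum_series hg hmom hbound ?_
    rw [← Real.norm_eq_abs, ← mem_ball_zero_iff, ← NNReal.coe_one, ← Metric.eball_coe]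
    simpa using hy

theorem analyticAt_integral_cexp_mul (hg : AEStronglyMeasurable g μ)
    (hmom : ∀ n : ℕ, Integrable (fun u => |u| ^ n * ‖g u‖) μ)
    (hbound : (fun n : ℕ => (∫ u, |u| ^ n * ‖g u‖ ∂μ) / n !) =O[atTop] fun _ => (1 : ℝ))
    (x : ℝ) : AnalyticAt ℝ (fun t : ℝ => ∫ u, Complex.exp (u * t * Complex.I) * g u ∂μ) x := by
  set gₓ : ℝ → ℂ := fun u => Complex.exp (u * x * Complex.I) * g u
  have h_norm : ∀ u, ‖gₓ u‖ = ‖g u‖ := fun u => by simp [gₓ, norm_cexp_mul_I]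
  have h_meas : AEStronglyMeasurable gₓ μ := by
    refine (Continuous.aestronglyMeasurable ?_).mul hg
    fun_prop
  have h_series := (hasFPowerSeriesOnBall h_meas (by simpa only [h_norm] using hmom)
    (by simpa only [h_norm] using hbound)).comp_sub x
  rw [zero_add] at h_series
  convert h_series.analyticAt using 2 with t
  congr 1 with u
  rw [← mul_assoc, ← Complex.exp_add]
  push_cast
  ring_nf

end FourierMoment

lemma moment_norm_mul_le {φ k : ℝ → ℂ} {B : ℝ} (hφ : ∀ u, ‖φ u‖ ≤ B) (n : ℕ) (u : ℝ) :
    |u| ^ n * ‖φ u * k u‖ ≤ B * (|u| ^ n * ‖k u‖) := by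
  rw [norm_mul, mul_left_comm]
  gcongr
  exact hφ u

theorem stmt10
    (k : ℝ → ℂ) (hkmeas : Measurable k)
    (hM : ∀ n : ℕ, Integrable (fun u => |u| ^ n * ‖k u‖))
    (hlim : ∃ C : ℝ, ∀ᶠ n : ℕ in atTop,
      (∫ u, |u| ^ n * ‖k u‖) / (n.factorial : ℝ) ≤ C)
    (φ : ℝ → ℂ) (hφcont : Continuous φ) (hφbd : ∃ B : ℝ, ∀ u, ‖φ u‖ ≤ B)
    (Ψ : ℝ → ℂ) (hΨ : ∀ t, Ψ t = ∫ u : ℝ, Complex.exp (u * t * Complex.I) * φ u * k u) :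
    ∀ x : ℝ, AnalyticAt ℝ Ψ x := by
  obtain ⟨C, hC⟩ := hlim
  obtain ⟨B, hB⟩ := hφbd
  have hΨ_eq : Ψ = fun t : ℝ => ∫ u : ℝ, Complex.exp (u * t * Complex.I) * (φ u * k u) := by
    simp only [funext hΨ, mul_assoc]
  have h_meas : AEStronglyMeasurable (fun u => φ u * k u) :=
    hφcont.aestronglyMeasurable.mul hkmeas.aestronglyMeasurable
  have h_mom (n : ℕ) : Integrable (fun u => |u| ^ n * ‖φ u * k u‖) :=
    ((hM n).const_mul B).mono'
      ((continuous_abs.pow n).aestronglyMeasurable.mul h_meas.norm)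
      (.of_forall fun u => by simpa [abs_mul, abs_pow] using moment_norm_mul_le hB n u)
  have hk_bound :
      (fun n : ℕ => (∫ u, |u| ^ n * ‖k u‖) / n.factorial) =O[atTop] fun _ => (1 : ℝ) :=
    IsBigO.of_bound C (hC.mono fun n hn => by
      rw [norm_one, mul_one, Real.norm_of_nonneg (by positivity)]
      exact hn)
  have h_bound : (fun n : ℕ => (∫ u, |u| ^ n * ‖φ u * k u‖) / n.factorial) =O[atTop]
      fun n : ℕ => (∫ u, |u| ^ n * ‖k u‖) / n.factorial :=
    IsBigO.of_bound B (.of_forall fun n => by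
      rw [Real.norm_of_nonneg (by positivity), Real.norm_of_nonneg (by positivity), ← mul_div_assoc]
      gcongr
      rw [← integral_const_mul]
      exact integral_mono_of_nonneg (.of_forall fun u => by positivity) ((hM n).const_mul B)
        (.of_forall (moment_norm_mul_le hB n)))
  rw [hΨ_eq]
  exact FourierMoment.analyticAt_integral_cexp_mul h_meas h_mom (h_bound.trans hk_bound)
end

section
/- Let k : ℝ → ℂ be measurable such that M_n = ∫_ℝ |u|^n |k(u)| du < ∞ for all n ≥ 0 with limsup_n M_n/n! < ∞, and suppose k does not vanish almost everywhere on any nonempty open interval of ℝ. Define f(t) = ∫_ℝ e^{iut} k(u) du for t ≥ 0 and assume f is a probability density when restricted appropriately. Then for any g ∈ L¹([0,∞)): if ∫_0^∞ f(t+s) g(s) ds = 0 for all t ≥ 0, then g = 0 almost everywhere. -/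
/-!
Put `φ(u) = ∫_0^∞ e^{isu} g(s) ds`. By Fubini the hypothesis says that
`Ψ(t) = ∫ e^{iut} k(u) φ(u) du` vanishes for `t ≥ 0`. The factorial growth of the moments of `k`
makes `Ψ` real-analytic, so `Ψ ≡ 0`, and injectivity of the Fourier transform on `L¹` gives
`k φ = 0` a.e. As `φ` is continuous and `k` vanishes a.e. on no interval, `φ ≡ 0`, and a second
use of Fourier injectivity gives `g = 0` a.e. on `(0, ∞)`.
-/

open MeasureTheory Filter Set
open scoped FourierTransform

open Complex in
noncomputable def expTransform (μ : Measure ℝ) (h : ℝ → ℂ) (t : ℝ) : ℂ :=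
  ∫ u, exp (u * t * I) * h u ∂μ

section Transform

open Complex

lemma norm_exp_ofReal_mul_ofReal_mul_I (a b : ℝ) : ‖exp (a * b * I)‖ = 1 := by
  rw [← ofReal_mul, norm_exp_ofReal_mul_I]

variable {μ : Measure ℝ} {h : ℝ → ℂ}

lemma norm_expTransform_le (t : ℝ) : ‖expTransform μ h t‖ ≤ ∫ u, ‖h u‖ ∂μ :=
  (norm_integral_le_integral_norm _).trans_eq <| by
    simp_rw [norm_mul, norm_exp_ofReal_mul_ofReal_mul_I, one_mul]

lemma continuous_expTransform (hh : Integrable h μ) : Continuous (expTransform μ h) :=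
  continuous_of_dominated (fun t => by fun_prop) (fun t => .of_forall fun u => by
      rw [norm_mul, norm_exp_ofReal_mul_ofReal_mul_I, one_mul]) hh.norm
    (.of_forall fun u => by fun_prop)

lemma fourier_eq_expTransform (w : ℝ) : 𝓕 h w = expTransform volume h (-(2 * Real.pi * w)) := by
  rw [Real.fourier_real_eq_integral_exp_smul]
  congr 1 with v
  rw [smul_eq_mul]
  push_cast
  congr 2
  ring

lemma expTransform_mul_expTransform [SFinite μ] {k g : ℝ → ℂ} (hk : Integrable k)
    (hg : Integrable g μ) (t : ℝ) :
    expTransform volume (fun u => k u * expTransform μ g u) t =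
      ∫ s, expTransform volume k (t + s) * g s ∂μ := by
  have hint : Integrable
      (fun p : ℝ × ℝ => exp (p.1 * t * I) * (k p.1 * (exp (p.2 * p.1 * I) * g p.2)))
      (volume.prod μ) := by
    refine (hk.norm.mul_prod hg.norm).mono' ?_ (.of_forall fun p => ?_)
    · exact (by fun_prop : Continuous fun p : ℝ × ℝ => exp (p.1 * t * I)).aestronglyMeasurable.mul
        (hk.1.comp_fst.mul <| (by fun_prop : Continuous fun p : ℝ × ℝ => exp (p.2 * p.1 * I))
          |>.aestronglyMeasurable.mul hg.1.comp_snd)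
    · simp [norm_exp_ofReal_mul_ofReal_mul_I]
  simp only [expTransform, ← integral_const_mul, ← integral_mul_const]
  rw [integral_integral_swap hint]
  congr 1 with s
  congr 1 with u
  rw [ofReal_add, mul_add, add_mul, exp_add, mul_comm (s : ℂ)]
  ring

end Transform

section Analytic

open Complex

variable {h : ℝ → ℂ} {B : ℝ} (hh : AEStronglyMeasurable h)
  (hmom : ∀ n : ℕ, Integrable (fun u => |u| ^ n * ‖h u‖))
  (hB : ∀ n : ℕ, ∫ u, |u| ^ n * ‖h u‖ ≤ B * n.factorial)
include hh hmom hB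

lemma hasSum_expTransform_add (t y : ℝ) (hy : |y| < 1) :
    HasSum (fun n : ℕ => y ^ n • ((n.factorial : ℂ)⁻¹ *
        expTransform volume (fun u => (u * I) ^ n * h u) t))
      (expTransform volume h (t + y)) := by
  set F : ℕ → ℝ → ℂ := fun n u => (u * y * I) ^ n / n.factorial * (exp (u * t * I) * h u)
  have hF_norm (n : ℕ) (u : ℝ) :
      ‖F n u‖ = |y| ^ n / n.factorial * (|u| ^ n * ‖h u‖) := by
    simp only [F, norm_mul, norm_div, norm_pow, norm_I, norm_real, Real.norm_eq_abs,
      norm_natCast, norm_exp_ofReal_mul_ofReal_mul_I]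
    ring
  have hF_int (n : ℕ) : Integrable (F n) :=
    ((hmom n).const_mul _).mono' (by fun_prop) (.of_forall fun u => (hF_norm n u).le)
  have hF_sum : Summable fun n => ∫ u, ‖F n u‖ := by
    refine .of_nonneg_of_le (fun n => integral_nonneg fun u => norm_nonneg _) (fun n => ?_)
      ((summable_geometric_of_lt_one (abs_nonneg y) hy).mul_left B)
    simp_rw [hF_norm, integral_const_mul]
    calc |y| ^ n / n.factorial * ∫ u, |u| ^ n * ‖h u‖
        ≤ |y| ^ n / n.factorial * (B * n.factorial) := by gcongr; exact hB n
      _ = B * |y| ^ n := by field_simp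
  have hF_hasSum (u : ℝ) : HasSum (F · u) (exp (u * (t + y : ℝ) * I) * h u) := by
    have hexp := (NormedSpace.expSeries_div_hasSum_exp (u * y * I : ℂ)).mul_right
      (exp (u * t * I) * h u)
    rwa [← exp_eq_exp_ℂ, ← mul_assoc, ← exp_add, ← add_mul, ← mul_add, ← ofReal_add,
      add_comm y] at hexp
  have hF_integral (n : ℕ) : ∫ u, F n u =
      y ^ n • ((n.factorial : ℂ)⁻¹ * expTransform volume (fun u => (u * I) ^ n * h u) t) := by
    simp only [expTransform, F, ← integral_const_mul, ← integral_smul]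
    congr 1 with u
    rw [real_smul]
    push_cast
    ring
  have hsum := hasSum_integral_of_summable_integral_norm hF_int hF_sum
  simp only [hF_integral, (hF_hasSum _).tsum_eq] at hsum
  exact hsum

lemma analyticAt_expTransform (t : ℝ) : AnalyticAt ℝ (expTransform volume h) t := by
  let c (n : ℕ) : ℂ :=
    (n.factorial : ℂ)⁻¹ * expTransform volume (fun u => (u * I) ^ n * h u) t
  let p : FormalMultilinearSeries ℝ ℝ ℂ := fun n => .mkPiRing ℝ (Fin n) (c n)
  have hp (n : ℕ) : p.coeff n = c n := by simp [p, FormalMultilinearSeries.coeff]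
  refine ⟨p, hasFPowerSeriesAt_iff.2 ?_⟩
  filter_upwards [Metric.ball_mem_nhds (0 : ℝ) one_pos] with y hy
  simp only [hp]
  exact hasSum_expTransform_add hh hmom hB t y (by simpa using hy)

lemma expTransform_eq_zero_of_eqOn_Ici (h0 : ∀ t, 0 ≤ t → expTransform volume h t = 0) :
    expTransform volume h = 0 := by
  have hana : AnalyticOnNhd ℝ (expTransform volume h) univ :=
    fun t _ => analyticAt_expTransform hh hmom hB t
  refine funext fun t => hana.eqOn_zero_of_preconnected_of_eventuallyEq_zero isPreconnected_univ
    (mem_univ 1) ?_ (mem_univ t)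
  filter_upwards [Ioi_mem_nhds zero_lt_one] with t ht using h0 t (le_of_lt ht)

end Analytic

section Injectivity

variable {V E : Type*} [NormedAddCommGroup V] [InnerProductSpace ℝ V] [FiniteDimensional ℝ V]
  [MeasurableSpace V] [BorelSpace V] [NormedAddCommGroup E] [NormedSpace ℂ E] [CompleteSpace E]

lemma integral_fourier_smul_eq {w : V → ℂ} {f : V → E} (hw : Integrable w) (hf : Integrable f) :
    ∫ x, 𝓕 w x • f x = ∫ ξ, w ξ • 𝓕 f ξ := by
  have := VectorFourier.integral_fourierIntegral_smul_eq_flip (L := innerₗ V)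
    Real.continuous_fourierChar continuous_inner hw hf
  rwa [flip_innerₗ] at this

/-- Every smooth compactly supported function is the Fourier transform of a Schwartz function
`w`, and `∫ 𝓕 w • f = ∫ w • 𝓕 f = 0`. -/
lemma ae_eq_zero_of_fourier_eq_zero {f : V → E} (hf : Integrable f) (h𝓕 : 𝓕 f = 0) :
    f =ᵐ[volume] 0 := by
  refine ae_eq_zero_of_integral_contDiff_smul_eq_zero hf.locallyIntegrable fun g g_diff g_supp => ?_
  let G : SchwartzMap V ℂ := (g_supp.comp_left Complex.ofReal_zero).toSchwartzMap
    (Complex.ofRealCLM.contDiff.comp g_diff)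
  have hG (x : V) : (g x : ℂ) = 𝓕 (𝓕⁻ G) x := by
    rw [FourierTransform.fourier_fourierInv_eq]; rfl
  calc ∫ x, g x • f x = ∫ x, 𝓕 (𝓕⁻ G) x • f x := by
        simp_rw [← hG, Complex.coe_smul]
    _ = ∫ ξ, (𝓕⁻ G) ξ • 𝓕 f ξ := by
        rw [SchwartzMap.fourier_coe, integral_fourier_smul_eq (𝓕⁻ G).integrable hf]
    _ = 0 := by simp [h𝓕]

variable {h : ℝ → ℂ}

lemma ae_eq_zero_of_expTransform_eq_zero (hh : Integrable h) (h0 : expTransform volume h = 0) :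
    h =ᵐ[volume] 0 :=
  ae_eq_zero_of_fourier_eq_zero hh <| funext fun w => by
    rw [fourier_eq_expTransform, h0]; rfl

lemma ae_restrict_eq_zero_of_expTransform_eq_zero {s : Set ℝ} (hs : MeasurableSet s)
    (hh : Integrable h (volume.restrict s)) (h0 : expTransform (volume.restrict s) h = 0) :
    ∀ᵐ u ∂volume.restrict s, h u = 0 := by
  have hind : s.indicator h =ᵐ[volume] 0 := by
    refine ae_eq_zero_of_expTransform_eq_zero ((integrable_indicator_iff hs).2 hh) ?_
    rw [← h0]
    ext t
    rw [expTransform, expTransform, ← integral_indicator hs]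
    simp only [indicator_mul_right]
  filter_upwards [ae_restrict_of_ae hind, ae_restrict_mem hs] with u hu hus
  rwa [indicator_of_mem hus] at hu

end Injectivity

lemma exists_forall_le_mul_of_eventually_div_le {a b : ℕ → ℝ} (hb : ∀ n, 0 < b n)
    (h : ∃ C, ∀ᶠ n in atTop, a n / b n ≤ C) : ∃ B, ∀ n, a n ≤ B * b n := by
  obtain ⟨C, hC⟩ := h
  obtain ⟨B, hB⟩ := (isBoundedUnder_of_eventually_le hC).bddAbove_range
  exact ⟨B, fun n => (div_le_iff₀ (hb n)).1 (hB ⟨n, rfl⟩)⟩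

section Moments

variable {k φ : ℝ → ℂ} {C : ℝ} (hφ : AEStronglyMeasurable φ) (hφC : ∀ u, ‖φ u‖ ≤ C)
  {n : ℕ} (hk : Integrable (fun u => |u| ^ n * ‖k u‖))
include hφ hφC hk

lemma integrable_pow_abs_mul_norm_mul : Integrable (fun u => |u| ^ n * ‖k u * φ u‖) := by
  simp_rw [norm_mul, ← mul_assoc]
  exact hk.mul_bdd hφ.norm (.of_forall fun u => by simpa using hφC u)

lemma integral_pow_abs_mul_norm_mul_le :
    ∫ u, |u| ^ n * ‖k u * φ u‖ ≤ C * ∫ u, |u| ^ n * ‖k u‖ := by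
  rw [← integral_const_mul]
  refine integral_mono (integrable_pow_abs_mul_norm_mul hφ hφC hk) (hk.const_mul C) fun u => ?_
  rw [norm_mul, mul_comm C, ← mul_assoc]
  gcongr
  exact hφC u

end Moments

lemma eq_zero_of_ae_mul_eq_zero {k φ : ℝ → ℂ} (hφ : Continuous φ)
    (hk : ∀ a b : ℝ, a < b → ¬ ∀ᵐ u ∂(volume.restrict (Ioo a b)), k u = 0)
    (hkφ : ∀ᵐ u, k u * φ u = 0) : φ = 0 := by
  by_contra hne
  obtain ⟨a, b, hab, hsub⟩ := (isOpen_ne_fun hφ continuous_const).exists_Ioo_subset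
    (Function.ne_iff.1 hne)
  refine hk a b hab ?_
  filter_upwards [ae_restrict_of_ae hkφ, ae_restrict_mem measurableSet_Ioo] with u hu hmem
  exact (mul_eq_zero.1 hu).resolve_right (hsub hmem)

theorem stmt11_general
    (k : ℝ → ℂ) (hkmeas : Measurable k)
    (hM : ∀ n : ℕ, Integrable (fun u => |u| ^ n * ‖k u‖))
    (hlim : ∃ C : ℝ, ∀ᶠ n : ℕ in atTop,
      (∫ u, |u| ^ n * ‖k u‖) / (n.factorial : ℝ) ≤ C)
    (hknz : ∀ a b : ℝ, a < b → ¬ (∀ᵐ u ∂(volume.restrict (Ioo a b)), k u = 0))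
    (f : ℝ → ℝ)
    (hf : ∀ t : ℝ, 0 ≤ t → (f t : ℂ) = ∫ u : ℝ, Complex.exp (u * t * Complex.I) * k u)
    (g : ℝ → ℝ) (hg : IntegrableOn g (Ioi 0))
    (hvanish : ∀ t : ℝ, 0 ≤ t → ∫ s in Ioi (0 : ℝ), f (t + s) * g s = 0) :
    ∀ᵐ s ∂(volume.restrict (Ioi (0 : ℝ))), g s = 0 := by
  obtain ⟨B, hB⟩ := exists_forall_le_mul_of_eventually_div_le (fun n => by positivity) hlim
  have hk : Integrable k :=
    (integrable_norm_iff hkmeas.aestronglyMeasurable).1 (by simpa using hM 0)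
  have hgC : Integrable (fun s => (g s : ℂ)) (volume.restrict (Ioi 0)) := hg.ofReal
  set φ := expTransform (volume.restrict (Ioi 0)) (fun s => (g s : ℂ))
  have hφ : Continuous φ := continuous_expTransform hgC
  have hφC : ∀ u, ‖φ u‖ ≤ ∫ s in Ioi 0, ‖(g s : ℂ)‖ := norm_expTransform_le
  have hkφ_mom (n : ℕ) := integrable_pow_abs_mul_norm_mul hφ.aestronglyMeasurable hφC (hM n)
  have hkφ_le (n : ℕ) : ∫ u, |u| ^ n * ‖k u * φ u‖ ≤
      (∫ s in Ioi 0, ‖(g s : ℂ)‖) * B * n.factorial :=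
    (integral_pow_abs_mul_norm_mul_le hφ.aestronglyMeasurable hφC (hM n)).trans <| by
      rw [mul_assoc]; gcongr; exact hB n
  have hΨ : expTransform volume (fun u => k u * φ u) = 0 := by
    refine expTransform_eq_zero_of_eqOn_Ici (hk.1.mul hφ.aestronglyMeasurable) hkφ_mom hkφ_le
      fun t ht => ?_
    calc _ = ∫ s in Ioi 0, ((f (t + s) * g s : ℝ) : ℂ) := by
          rw [expTransform_mul_expTransform hk hgC]
          refine setIntegral_congr_fun measurableSet_Ioi fun s hs => ?_
          rw [expTransform, ← hf (t + s) (add_nonneg ht (le_of_lt hs)), Complex.ofReal_mul]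
      _ = 0 := by rw [integral_complex_ofReal, hvanish t ht, Complex.ofReal_zero]
  have hφ0 : φ = 0 := eq_zero_of_ae_mul_eq_zero hφ hknz <|
    ae_eq_zero_of_expTransform_eq_zero (hk.mul_bdd hφ.aestronglyMeasurable (.of_forall hφC)) hΨ
  filter_upwards [ae_restrict_eq_zero_of_expTransform_eq_zero measurableSet_Ioi hgC hφ0]
    with s hs
  exact_mod_cast hs

theorem stmt11
    (k : ℝ → ℂ) (hkmeas : Measurable k)
    (hM : ∀ n : ℕ, Integrable (fun u => |u| ^ n * ‖k u‖))
    (hlim : ∃ C : ℝ, ∀ᶠ n : ℕ in atTop,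
      (∫ u, |u| ^ n * ‖k u‖) / (n.factorial : ℝ) ≤ C)
    (hknz : ∀ a b : ℝ, a < b → ¬ (∀ᵐ u ∂(volume.restrict (Ioo a b)), k u = 0))
    (f : ℝ → ℝ) (hpos : ∀ x, 0 ≤ f x) (hmeas : Measurable f) (hone : ∫ x, f x = 1)
    (hf : ∀ t : ℝ, 0 ≤ t → (f t : ℂ) = ∫ u : ℝ, Complex.exp (u * t * Complex.I) * k u)
    (g : ℝ → ℝ) (hg : IntegrableOn g (Ioi 0))
    (hvanish : ∀ t : ℝ, 0 ≤ t → ∫ s in Ioi (0 : ℝ), f (t + s) * g s = 0) :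
    ∀ᵐ s ∂(volume.restrict (Ioi (0 : ℝ))), g s = 0 :=
  stmt11_general k hkmeas hM hlim hknz f hf g hg hvanish
end

section
/- Let (c_n) be a decreasing sequence in (0,1) with Σ_n 1/(−log c_n) = ∞, and let (b_k)_{k≥0} and (b'_k)_{k≥0} be two summable sequences of nonnegative reals such that Σ_{k≥0} b_k c_n^k = Σ_{k≥0} b'_k c_n^k for all n. Then b_k = b'_k for all k ≥ 0. -/
/-!
The sequence `c n` decreases strictly to a limit `L ∈ [0, 1)` without ever reaching it, so the two
power series `∑ b k x ^ k` and `∑ b' k x ^ k`, both analytic on the unit disc because their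
coefficients are summable, agree on a set accumulating at an interior point of the disc. By the
identity theorem they agree on the whole disc, hence near `0`, and so have the same coefficients.
-/

open Set Filter Topology FormalMultilinearSeries

theorem StrictAnti.tendsto_nhdsGT_ciInf {α : Type*} [ConditionallyCompleteLinearOrder α]
    [TopologicalSpace α] [OrderTopology α] {c : ℕ → α} (hc : StrictAnti c)
    (hbdd : BddBelow (range c)) : Tendsto c atTop (𝓝[>] ⨅ n, c n) :=
  tendsto_nhdsWithin_of_tendsto_nhds_of_eventually_within _
    (tendsto_atTop_ciInf hc.antitone hbdd)
    (Eventually.of_forall fun n => (ciInf_le hbdd (n + 1)).trans_lt (hc n.lt_succ_self))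

section PowerSeries

variable {𝕜 : Type*} [RCLike 𝕜]

theorem hasFPowerSeriesOnBall_tsum_mul_pow {a : ℕ → 𝕜} (ha : Summable a) :
    HasFPowerSeriesOnBall (fun x => ∑' k, a k * x ^ k) (ofScalars 𝕜 a) 0 1 := by
  have hradius : 1 ≤ (ofScalars 𝕜 a).radius := by
    simpa using (ofScalars 𝕜 a).le_radius_of_tendsto (r := 1) (l := 0)
      (by simpa [ofScalars_norm] using ha.tendsto_atTop_zero.norm)
  have hsum : (ofScalars 𝕜 a).sum = fun x => ∑' k, a k * x ^ k :=
    funext (ofScalars_sum_eq a)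
  exact hsum ▸ ((ofScalars 𝕜 a).hasFPowerSeriesOnBall (one_pos.trans_le hradius)).mono
    one_pos hradius

theorem eq_of_frequently_tsum_mul_pow_eq {a a' : ℕ → 𝕜} (ha : Summable a) (ha' : Summable a')
    {z : 𝕜} (hz : ‖z‖ < 1)
    (h : ∃ᶠ x in 𝓝[≠] z, ∑' k, a k * x ^ k = ∑' k, a' k * x ^ k) : a = a' := by
  have hf := hasFPowerSeriesOnBall_tsum_mul_pow ha
  have hf' := hasFPowerSeriesOnBall_tsum_mul_pow ha'
  have hz : z ∈ Metric.eball (0 : 𝕜) 1 := by simpa [edist_zero_right, ← ofReal_norm] using hz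
  have heqOn := hf.analyticOnNhd.eqOn_of_preconnected_of_frequently_eq hf'.analyticOnNhd
    Metric.isPreconnected_eball hz h
  have heq : (fun x => ∑' k, a k * x ^ k) =ᶠ[𝓝 0] fun x => ∑' k, a' k * x ^ k :=
    eventuallyEq_of_mem (Metric.isOpen_eball.mem_nhds (Metric.mem_eball_self one_pos)) heqOn
  exact ofScalars_series_injective 𝕜 (E := 𝕜)
    (hf.hasFPowerSeriesAt.eq_formalMultilinearSeries (hf'.hasFPowerSeriesAt.congr heq.symm))

end PowerSeries

theorem stmt14_general
    (c : ℕ → ℝ) (hc : ∀ n, c n ∈ Ioo (0 : ℝ) 1) (hanti : StrictAnti c)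
    (b b' : ℕ → ℝ)
    (hbsum : Summable b) (hb'sum : Summable b')
    (heq : ∀ n, ∑' k : ℕ, b k * c n ^ k = ∑' k : ℕ, b' k * c n ^ k) :
    ∀ k, b k = b' k := by
  have hbdd : BddBelow (range c) := ⟨0, forall_mem_range.2 fun n => (hc n).1.le⟩
  have hlim : ‖⨅ n, c n‖ < 1 := by
    rw [Real.norm_of_nonneg (le_ciInf fun n => (hc n).1.le)]
    exact (ciInf_le hbdd 0).trans_lt (hc 0).2
  have hfreq : ∃ᶠ x in 𝓝[≠] ⨅ n, c n, ∑' k, b k * x ^ k = ∑' k, b' k * x ^ k :=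
    ((hanti.tendsto_nhdsGT_ciInf hbdd).mono_right (nhdsGT_le_nhdsNE _)).frequently
      (.of_forall heq)
  exact congrFun (eq_of_frequently_tsum_mul_pow_eq hbsum hb'sum hlim hfreq)

theorem stmt14
    (c : ℕ → ℝ) (hc : ∀ n, c n ∈ Ioo (0 : ℝ) 1) (hanti : StrictAnti c)
    (hdiv : ¬ Summable (fun n => 1 / (-Real.log (c n))))
    (b b' : ℕ → ℝ) (hb : ∀ k, 0 ≤ b k) (hb' : ∀ k, 0 ≤ b' k)
    (hbsum : Summable b) (hb'sum : Summable b')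
    (heq : ∀ n, ∑' k : ℕ, b k * c n ^ k = ∑' k : ℕ, b' k * c n ^ k) :
    ∀ k, b k = b' k :=
  stmt14_general c hc hanti b b' hbsum hb'sum heq
end

section
/- Let μ be a probability measure on ℝ whose support is not contained in (-∞,0). Suppose there exists a probability measure ν on ℝ with support contained in (-∞,0] such that the convolution μ*ν belongs to the class 𝒞 of measures determined by their convolution powers restricted to [0,∞). Then μ belongs to 𝒞. -/
open MeasureTheory Set

/-- The `n`-fold convolution power of a measure on `ℝ`, with `μ^{*0} = δ₀`. -/
noncomputable def convPow (μ : Measure ℝ) : ℕ → Measure ℝ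
  | 0 => Measure.dirac 0
  | n + 1 => (convPow μ n).conv μ

/-- The class 𝒞 of probability measures on `ℝ` determined by their convolution
powers restricted to `[0,∞)`. -/
def MemClassC (μ : Measure ℝ) : Prop :=
  ∀ μ₁ : Measure ℝ, IsProbabilityMeasure μ₁ →
    (∀ n : ℕ, 1 ≤ n → ∀ s : Set ℝ, MeasurableSet s → s ⊆ Ici 0 →
      convPow μ n s = convPow μ₁ n s) → μ = μ₁

/-!
Taking `n = 1` shows that `μ` and `μ₁` agree on `[0, ∞)`. Since `ν^{*n}` lives on `(-∞, 0]`, the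
restriction of `κ * ν^{*n}` to `[0, ∞)` only depends on `κ` restricted to `[0, ∞)`; together with
`(μ * ν)^{*n} = μ^{*n} * ν^{*n}` this gives `μ * ν = μ₁ * ν`, because `μ * ν ∈ 𝒞`. Cancelling the
common part on `[0, ∞)`, the parts `α`, `β` of `μ`, `μ₁` on `(-∞, 0)` satisfy `α * ν = β * ν`.
All three measures live on `(-∞, 0]`, so their Laplace transforms at `t ≥ 0` are finite and that of
`ν` is positive: `α` and `β` have the same Laplace transform at every `n : ℕ`, which determines a
finite measure on `(-∞, 0]` by Stone–Weierstrass.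
-/

open Real Measure BoundedContinuousFunction
open scoped ENNReal

-- Equal to `exp` on `(-∞, 0]` and injective: its powers integrate to Laplace transforms of
-- measures on `(-∞, 0]`, and the algebra it generates separates points.
noncomputable def expExtension : ℝ →ᵇ ℝ :=
  ofNormedAddCommGroup (fun x ↦ exp (min x 0) - exp (-max x 0) + 1) (by fun_prop) 2 fun x ↦ by
    have h₁ : exp (min x 0) ≤ 1 := exp_le_one_iff.2 (min_le_right x 0)
    have h₂ : exp (-max x 0) ≤ 1 := exp_le_one_iff.2 (by simp)
    rw [Real.norm_eq_abs, abs_le]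
    constructor <;> linarith [exp_pos (min x 0), exp_pos (-max x 0)]

lemma expExtension_apply (x : ℝ) : expExtension x = exp (min x 0) - exp (-max x 0) + 1 := rfl

lemma expExtension_of_nonpos {x : ℝ} (hx : x ≤ 0) : expExtension x = exp x := by
  simp [expExtension_apply, hx]

lemma strictMono_expExtension : StrictMono expExtension := by
  intro x y hxy
  have h₁ : exp (min x 0) ≤ exp (min y 0) := exp_le_exp.2 (min_le_min_right 0 hxy.le)
  have h₂ : exp (-max y 0) ≤ exp (-max x 0) :=
    exp_le_exp.2 (neg_le_neg (max_le_max_right 0 hxy.le))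
  rw [expExtension_apply, expExtension_apply]
  rcases lt_or_ge x 0 with hx | hx
  · have : exp (min x 0) < exp (min y 0) := exp_lt_exp.2 (by simp [hx, hxy])
    linarith
  · have : exp (-max y 0) < exp (-max x 0) :=
      exp_lt_exp.2 (by simp [hx, hxy, (hx.trans_lt hxy).le])
    linarith

lemma integral_pow_expExtension {α : Measure ℝ} (hα : ∀ᵐ x ∂α, x ≤ 0) (n : ℕ) :
    ∫ x, (expExtension ^ n) x ∂α = (∫⁻ x, ENNReal.ofReal (exp (n * x)) ∂α).toReal := by
  rw [← integral_eq_lintegral_of_nonneg_ae (ae_of_all _ fun x ↦ (exp_pos _).le) (by fun_prop)]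
  refine integral_congr_ae ?_
  filter_upwards [hα] with x hx
  rw [pow_apply, expExtension_of_nonpos hx, exp_nat_mul]

theorem ext_of_lintegral_exp_nat_mul {α β : Measure ℝ} [IsFiniteMeasure α] [IsFiniteMeasure β]
    (hα : ∀ᵐ x ∂α, x ≤ 0) (hβ : ∀ᵐ x ∂β, x ≤ 0)
    (h : ∀ n : ℕ,
      ∫⁻ x, ENNReal.ofReal (exp (n * x)) ∂α = ∫⁻ x, ENNReal.ofReal (exp (n * x)) ∂β) :
    α = β := by
  refine ext_of_forall_mem_subalgebra_integral_eq_of_polish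
    (A := StarAlgebra.adjoin ℝ {expExtension}) ?_ fun g hg ↦ ?_
  · intro x y hxy
    exact ⟨_, ⟨_, ⟨expExtension, StarAlgebra.self_mem_adjoin_singleton ℝ _, rfl⟩, rfl⟩,
      strictMono_expExtension.injective.ne hxy⟩
  · replace hg : g ∈ Subalgebra.toSubmodule (StarAlgebra.adjoin ℝ {expExtension}).toSubalgebra :=
      hg
    have hstar : star expExtension = expExtension := by ext; simp
    rw [StarAlgebra.adjoin_eq_span, Set.star_singleton, hstar, union_self] at hg
    induction hg using Submodule.span_induction with
    | mem g hg =>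
      obtain ⟨n, rfl⟩ := Submonoid.mem_closure_singleton.1 hg
      rw [integral_pow_expExtension hα, integral_pow_expExtension hβ, h]
    | zero => simp
    | add f g _ _ hf hg =>
      simp only [BoundedContinuousFunction.add_apply]
      rw [integral_add (f.integrable _) (g.integrable _),
        integral_add (f.integrable _) (g.integrable _), hf, hg]
    | smul c g _ hg => simp only [BoundedContinuousFunction.smul_apply, integral_smul, hg]

section
variable {μ ν : Measure ℝ}

lemma lintegral_exp_mul_conv [SFinite ν] (t : ℝ) :
    ∫⁻ z, ENNReal.ofReal (exp (t * z)) ∂(μ ∗ ν) =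
      (∫⁻ x, ENNReal.ofReal (exp (t * x)) ∂μ) * ∫⁻ y, ENNReal.ofReal (exp (t * y)) ∂ν := by
  rw [lintegral_conv (by fun_prop), ← lintegral_mul_const _ (by fun_prop)]
  simp_rw [mul_add, exp_add, ENNReal.ofReal_mul (exp_pos _).le]
  exact lintegral_congr fun x ↦ lintegral_const_mul _ (by fun_prop)

lemma lintegral_exp_mul_ne_zero [NeZero ν] (t : ℝ) :
    ∫⁻ y, ENNReal.ofReal (exp (t * y)) ∂ν ≠ 0 := by
  rw [Ne, lintegral_eq_zero_iff (by fun_prop)]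
  intro h
  refine NeZero.ne ν (ae_eq_bot.1 (Filter.eventually_false_iff_eq_bot.1 ?_))
  filter_upwards [h] with y hy
  exact (exp_pos (t * y)).not_ge (by simpa using hy)

lemma lintegral_exp_mul_ne_top [IsFiniteMeasure ν] (hν : ∀ᵐ y ∂ν, y ≤ 0) {t : ℝ} (ht : 0 ≤ t) :
    ∫⁻ y, ENNReal.ofReal (exp (t * y)) ∂ν ≠ ∞ := by
  refine ne_top_of_le_ne_top (measure_ne_top ν univ) ?_
  calc ∫⁻ y, ENNReal.ofReal (exp (t * y)) ∂ν ≤ ∫⁻ _, 1 ∂ν := by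
        refine lintegral_mono_ae ?_
        filter_upwards [hν] with y hy
        exact ENNReal.ofReal_le_one.2 (exp_le_one_iff.2 (mul_nonpos_of_nonneg_of_nonpos ht hy))
    _ = ν univ := lintegral_one

lemma ae_nonpos_conv [SFinite μ] [SFinite ν] (hμ : ∀ᵐ x ∂μ, x ≤ 0) (hν : ∀ᵐ y ∂ν, y ≤ 0) :
    ∀ᵐ z ∂(μ ∗ ν), z ≤ 0 := by
  rw [conv, ae_map_iff measurable_add.aemeasurable measurableSet_Iic,
    ae_prod_iff_ae_ae (measurableSet_le (by fun_prop) (by fun_prop))]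
  filter_upwards [hμ] with x hx
  filter_upwards [hν] with y hy
  linarith

lemma conv_restrict_Ici_eq {κ κ' τ : Measure ℝ} [SFinite κ] [SFinite κ'] [SFinite τ]
    (hτ : ∀ᵐ y ∂τ, y ≤ 0) (h : κ.restrict (Ici 0) = κ'.restrict (Ici 0)) :
    (κ ∗ τ).restrict (Ici 0) = (κ' ∗ τ).restrict (Ici 0) := by
  rw [restrict_congr_meas measurableSet_Ici] at h ⊢
  intro s hsub hs
  rw [conv, conv, map_apply measurable_add hs, map_apply measurable_add hs,
    prod_apply_symm (measurable_add hs), prod_apply_symm (measurable_add hs)]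
  refine lintegral_congr_ae ?_
  filter_upwards [hτ] with y hy
  refine h _ (fun x hx ↦ ?_) (measurable_add_const y hs)
  have : 0 ≤ x + y := hsub hx
  simp only [mem_Ici]
  linarith

instance [SFinite μ] (n : ℕ) : SFinite (convPow μ n) := by
  induction n with
  | zero => unfold convPow; infer_instance
  | succ n ih => unfold convPow; infer_instance

lemma convPow_one [SFinite μ] : convPow μ 1 = μ := dirac_zero_conv μ

lemma convPow_conv [SFinite μ] [SFinite ν] (n : ℕ) :
    convPow (μ ∗ ν) n = convPow μ n ∗ convPow ν n := by
  induction n with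
  | zero => exact (dirac_zero_conv _).symm
  | succ n ih =>
    simp only [convPow, ih]
    rw [conv_assoc, conv_assoc]
    congr 1
    rw [← conv_assoc, conv_comm (convPow ν n) μ, conv_assoc]

lemma ae_nonpos_convPow [SFinite ν] (hν : ∀ᵐ y ∂ν, y ≤ 0) (n : ℕ) :
    ∀ᵐ y ∂(convPow ν n), y ≤ 0 := by
  induction n with
  | zero => exact (ae_dirac_iff measurableSet_Iic).2 le_rfl
  | succ n ih => exact ae_nonpos_conv ih hν

end

theorem eq_of_conv_eq_of_restrict_Ici_eq {μ μ₁ ν : Measure ℝ} [IsFiniteMeasure μ]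
    [IsFiniteMeasure μ₁] [IsFiniteMeasure ν] [NeZero ν] (hν : ∀ᵐ y ∂ν, y ≤ 0)
    (hconv : μ ∗ ν = μ₁ ∗ ν) (hpos : μ.restrict (Ici 0) = μ₁.restrict (Ici 0)) : μ = μ₁ := by
  have hdecomp (m : Measure ℝ) : m.restrict (Iio 0) + m.restrict (Ici 0) = m := by
    simpa using m.restrict_add_restrict_compl (measurableSet_Iio (a := (0 : ℝ)))
  have hneg : μ.restrict (Iio 0) ∗ ν = μ₁.restrict (Iio 0) ∗ ν := by
    rw [← hdecomp μ, ← hdecomp μ₁, add_conv, add_conv, hpos] at hconv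
    ext s hs
    exact (ENNReal.add_left_inj (measure_ne_top _ s)).1 (congrArg (· s) hconv)
  have hlaplace (n : ℕ) : ∫⁻ x, ENNReal.ofReal (exp (n * x)) ∂(μ.restrict (Iio 0)) =
      ∫⁻ x, ENNReal.ofReal (exp (n * x)) ∂(μ₁.restrict (Iio 0)) := by
    have := congrArg (fun m ↦ ∫⁻ z, ENNReal.ofReal (exp (n * z)) ∂m) hneg
    simp only [lintegral_exp_mul_conv] at this
    exact (ENNReal.mul_left_inj (lintegral_exp_mul_ne_zero n)
      (lintegral_exp_mul_ne_top hν n.cast_nonneg)).1 this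
  have hnonpos (m : Measure ℝ) : ∀ᵐ x ∂(m.restrict (Iio 0)), x ≤ 0 :=
    (ae_restrict_mem measurableSet_Iio).mono fun _ hx ↦ le_of_lt hx
  rw [← hdecomp μ, ← hdecomp μ₁, ext_of_lintegral_exp_nat_mul (hnonpos μ) (hnonpos μ₁) hlaplace,
    hpos]

theorem stmt15_general
    (μ : Measure ℝ) [IsProbabilityMeasure μ]
    (ν : Measure ℝ) [IsProbabilityMeasure ν] (hν : ν (Ioi 0) = 0)
    (hconv : MemClassC (μ.conv ν)) :
    MemClassC μ := by
  intro μ₁ _ h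
  have hν' : ∀ᵐ y ∂ν, y ≤ 0 := (measure_eq_zero_iff_ae_notMem.1 hν).mono fun _ hy ↦ not_lt.1 hy
  have hpow (n : ℕ) (hn : 1 ≤ n) :
      (convPow μ n).restrict (Ici 0) = (convPow μ₁ n).restrict (Ici 0) :=
    (restrict_congr_meas measurableSet_Ici).2 fun s hsub hs ↦ h n hn s hs hsub
  refine eq_of_conv_eq_of_restrict_Ici_eq hν' (hconv _ inferInstance fun n hn s hs hsub ↦ ?_)
    (by simpa only [convPow_one] using hpow 1 le_rfl)
  rw [convPow_conv, convPow_conv]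
  exact (restrict_congr_meas measurableSet_Ici).1
    (conv_restrict_Ici_eq (ae_nonpos_convPow hν' n) (hpow n hn)) s hsub hs

theorem stmt15
    (μ : Measure ℝ) [IsProbabilityMeasure μ] (hsupp : μ (Ici 0) ≠ 0)
    (ν : Measure ℝ) [IsProbabilityMeasure ν] (hν : ν (Ioi 0) = 0)
    (hconv : MemClassC (μ.conv ν)) :
    MemClassC μ :=
  stmt15_general μ ν hν hconv
end
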